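/- For 0 < a < b, let T(a,b) be the triangle with vertices (0,0), (a,0), (a, √(b² − a²)) and Φ_{a,b}(ρ) its circular transform. Then Φ_{a,b}(ρ) = arccos(a/b) for 0 < ρ ≤ a, Φ_{a,b}(ρ) = arccos(a/b) − arccos(a/ρ) for a ≤ ρ < b, and Φ_{a,b}(ρ) = 0 for ρ ≥ b. -/

import Mathlib

/-!
In polar coordinates the triangle `T(a,b)` is cut out by `0 ≤ θ ≤ arccos (a / b)` (the angle of
its hypotenuse) together with `ρ cos θ ≤ a`, i.e. `θ ≥ arccos (a / ρ)`, where `arccos (a / ρ) = 0`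
once `ρ ≤ a`. Hence the circle of radius `ρ` meets `T(a,b)` in the arc
`arccos (a / ρ) ≤ θ ≤ arccos (a / b)`, and `Φ_{a,b}(ρ) = max (arccos (a / b) - arccos (a / ρ)) 0`,
which gives the three cases.
-/

open Real MeasureTheory

noncomputable abbrev E2 : Type := EuclideanSpace ℝ (Fin 2)

/-- The point `(a, b)` of the Euclidean plane. -/
noncomputable def pt2 (a b : ℝ) : E2 := (EuclideanSpace.equiv (Fin 2) ℝ).symm ![a, b]

/-- The circular transform of a set `S ⊆ ℝ²`: `R_S(ρ) = ∫₀^{2π} 1_S(ρ cos θ, ρ sin θ) dθ`. -/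
noncomputable def circTransform (S : Set E2) (ρ : ℝ) : ℝ :=
  ∫ θ in (0 : ℝ)..(2 * π), S.indicator (fun _ => (1 : ℝ)) (pt2 (ρ * cos θ) (ρ * sin θ))

/-- The right triangle `T(a,b) = conv((0,0), (a,0), (a, √(b² − a²)))`. -/
noncomputable def Tri (a b : ℝ) : Set E2 :=
  convexHull ℝ {pt2 0 0, pt2 a 0, pt2 a (Real.sqrt (b ^ 2 - a ^ 2))}

/-- `Φ_{a,b}`, the circular transform of the right triangle `T(a,b)`. -/
noncomputable def Phi (a b ρ : ℝ) : ℝ := circTransform (Tri a b) ρ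

open Set

@[simp] lemma pt2_apply_zero (x y : ℝ) : pt2 x y 0 = x := by simp [pt2]

@[simp] lemma pt2_apply_one (x y : ℝ) : pt2 x y 1 = y := by simp [pt2]

lemma smul_pt2 (t x y : ℝ) : t • pt2 x y = pt2 (t * x) (t * y) := by
  ext i; fin_cases i <;> simp

lemma pt2_add_pt2 (x y x' y' : ℝ) : pt2 x y + pt2 x' y' = pt2 (x + x') (y + y') := by
  ext i; fin_cases i <;> simp

lemma pt2_mem_convexHull_iff {a c : ℝ} (ha : 0 < a) (hc : 0 < c) (x y : ℝ) :
    pt2 x y ∈ convexHull ℝ {pt2 0 0, pt2 a 0, pt2 a c} ↔ x ≤ a ∧ 0 ≤ y ∧ a * y ≤ c * x := by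
  constructor
  · intro hp
    set K : Set E2 := {p | p 0 ≤ a ∧ 0 ≤ p 1 ∧ a * p 1 ≤ c * p 0}
    have hK : Convex ℝ K := by
      rintro p ⟨hp₁, hp₂, hp₃⟩ q ⟨hq₁, hq₂, hq₃⟩ s t hs ht hst
      simp only [K, mem_ofPred_eq, PiLp.add_apply, PiLp.smul_apply, smul_eq_mul]
      refine ⟨?_, ?_, ?_⟩ <;> nlinarith
    have hvert : {pt2 0 0, pt2 a 0, pt2 a c} ⊆ K := by
      rintro p (rfl | rfl | rfl) <;> simp [K, ha.le, hc.le, mul_comm c a, (mul_pos ha hc).le]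
    simpa [K] using convexHull_min hvert hK hp
  · rintro ⟨hxa, hy, hyx⟩
    let w : Fin 3 → ℝ := ![1 - x / a, x / a - y / c, y / c]
    let z : Fin 3 → E2 := ![pt2 0 0, pt2 a 0, pt2 a c]
    have hcomb : ∑ i, w i • z i = pt2 x y := by
      simp only [Fin.sum_univ_three, w, z, Matrix.cons_val, smul_pt2, pt2_add_pt2]
      congr 1 <;> field_simp <;> ring
    rw [← hcomb]
    refine (convex_convexHull ℝ _).sum_mem (fun i _ => ?_) ?_ (fun i _ => subset_convexHull ℝ _ ?_)
    · fin_cases i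
      · simpa [w] using div_le_one_of_le₀ hxa ha.le
      · simpa [w, div_le_div_iff₀ hc ha, mul_comm] using hyx
      · simpa [w] using div_nonneg hy hc.le
    · simp [w, Fin.sum_univ_three]
    · fin_cases i <;> simp [z]

namespace Real

lemma le_pi_of_sin_nonneg {θ : ℝ} (h2π : θ < 2 * π) (hs : 0 ≤ sin θ) : θ ≤ π := by
  by_contra! hπ
  have : sin (θ - 2 * π) < 0 := sin_neg_of_neg_of_neg_pi_lt (by linarith) (by linarith)
  rw [sin_sub_two_pi] at this
  linarith

lemma arccos_le_iff_cos_le {x θ : ℝ} (hx : -1 ≤ x) (hθ : θ ∈ Icc 0 π) :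
    arccos x ≤ θ ↔ cos θ ≤ x := by
  rcases le_or_gt 1 x with hx₁ | hx₁
  · simp [arccos_of_one_le hx₁, hθ.1, (cos_le_one θ).trans hx₁]
  · conv_rhs => rw [← cos_arccos hx hx₁.le]
    exact (strictAntiOn_cos.le_iff_ge hθ ⟨arccos_nonneg x, arccos_le_pi x⟩).symm

lemma le_arccos_iff_le_cos {x θ : ℝ} (hx : x ≤ 1) (hθ : θ ∈ Icc 0 π) :
    θ ≤ arccos x ↔ x ≤ cos θ := by
  rcases lt_or_ge x (-1) with hx₁ | hx₁
  · simp [arccos_of_le_neg_one hx₁.le, hθ.2, hx₁.le.trans (neg_one_le_cos θ)]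
  · conv_rhs => rw [← cos_arccos hx₁ hx]
    exact (strictAntiOn_cos.le_iff_ge ⟨arccos_nonneg x, arccos_le_pi x⟩ hθ).symm

end Real

lemma mul_sin_le_sqrt_mul_cos_iff {a b θ : ℝ} (ha : 0 < a) (hab : a < b) (hs : 0 ≤ sin θ) :
    a * sin θ ≤ √(b ^ 2 - a ^ 2) * cos θ ↔ a / b ≤ cos θ := by
  have hb : 0 < b := ha.trans hab
  have hh : 0 < √(b ^ 2 - a ^ 2) := Real.sqrt_pos.2 (by nlinarith)
  have hh2 : √(b ^ 2 - a ^ 2) ^ 2 = b ^ 2 - a ^ 2 := Real.sq_sqrt (by nlinarith)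
  have hpyth := sin_sq_add_cos_sq θ
  rw [div_le_iff₀' hb]
  constructor
  · intro hle
    have hc : 0 < cos θ := by
      have hc₀ : 0 ≤ cos θ := nonneg_of_mul_nonneg_right ((mul_nonneg ha.le hs).trans hle) hh
      refine hc₀.lt_of_ne fun hc => ?_
      rw [← hc, mul_zero] at hle
      have hs₀ : sin θ = 0 := le_antisymm (nonpos_of_mul_nonpos_right hle ha) hs
      rw [hs₀, ← hc] at hpyth
      norm_num at hpyth
    have hsq : a ^ 2 ≤ (b * cos θ) ^ 2 := by
      nlinarith [pow_le_pow_left₀ (mul_nonneg ha.le hs) hle 2]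
    exact (pow_le_pow_iff_left₀ ha.le (mul_pos hb hc).le two_ne_zero).1 hsq
  · intro hle
    have hc : 0 ≤ cos θ := by nlinarith
    refine (pow_le_pow_iff_left₀ (mul_nonneg ha.le hs) (mul_nonneg hh.le hc) two_ne_zero).1 ?_
    nlinarith [pow_le_pow_left₀ ha.le hle 2]

lemma pt2_polar_mem_Tri_iff {a b ρ θ : ℝ} (ha : 0 < a) (hab : a < b) (hρ : 0 < ρ)
    (hθ : θ ∈ Ico 0 (2 * π)) :
    pt2 (ρ * cos θ) (ρ * sin θ) ∈ Tri a b ↔ θ ∈ Icc (arccos (a / ρ)) (arccos (a / b)) := by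
  have hb : 0 < b := ha.trans hab
  have hh : 0 < √(b ^ 2 - a ^ 2) := Real.sqrt_pos.2 (by nlinarith)
  have hb₁ : a / b ≤ 1 := (div_le_one hb).2 hab.le
  have hρ₁ : -1 ≤ a / ρ := by linarith [div_pos ha hρ]
  rw [Tri, pt2_mem_convexHull_iff ha hh, ← le_div_iff₀' hρ, mul_nonneg_iff_of_pos_left hρ,
    mul_left_comm a, mul_left_comm _ ρ, mul_le_mul_iff_right₀ hρ]
  constructor
  · rintro ⟨hcos, hsin, hle⟩
    have hθπ : θ ∈ Icc 0 π := ⟨hθ.1, le_pi_of_sin_nonneg hθ.2 hsin⟩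
    exact ⟨(arccos_le_iff_cos_le hρ₁ hθπ).2 hcos,
      (le_arccos_iff_le_cos hb₁ hθπ).2 ((mul_sin_le_sqrt_mul_cos_iff ha hab hsin).1 hle)⟩
  · rintro ⟨hρθ, hθb⟩
    have hθπ : θ ∈ Icc 0 π :=
      ⟨hθ.1, hθb.trans ((arccos_lt_pi_div_two.2 (div_pos ha hb)).le.trans (by linarith [pi_pos]))⟩
    have hsin := sin_nonneg_of_nonneg_of_le_pi hθπ.1 hθπ.2
    exact ⟨(arccos_le_iff_cos_le hρ₁ hθπ).1 hρθ, hsin,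
      (mul_sin_le_sqrt_mul_cos_iff ha hab hsin).2 ((le_arccos_iff_le_cos hb₁ hθπ).1 hθb)⟩

lemma circTransform_eq_of_mem_iff {S : Set E2} {ρ β α : ℝ} (hβ : 0 ≤ β) (hα : α ≤ 2 * π)
    (hS : ∀ θ ∈ Ico 0 (2 * π), pt2 (ρ * cos θ) (ρ * sin θ) ∈ S ↔ θ ∈ Icc β α) :
    circTransform S ρ = max (α - β) 0 := by
  have hae : ∀ᵐ θ, θ ∈ uIoc 0 (2 * π) →
      S.indicator (fun _ => (1 : ℝ)) (pt2 (ρ * cos θ) (ρ * sin θ)) =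
        (Icc β α).indicator (fun _ => 1) θ := by
    -- `hS` says nothing at the endpoint `2π`, a null set.
    filter_upwards [volume.ae_ne (2 * π)] with θ hne hθ
    rw [uIoc_of_le two_pi_pos.le] at hθ
    simp only [indicator, hS θ ⟨hθ.1.le, hθ.2.lt_of_ne hne⟩]
  rw [circTransform, intervalIntegral.integral_congr_ae hae,
    intervalIntegral.integral_of_le two_pi_pos.le, setIntegral_indicator measurableSet_Icc,
    setIntegral_const, smul_eq_mul, mul_one,
    measureReal_congr (μ := volume) ((Ioc_ae_eq_Icc (b := 2 * π)).inter (ae_eq_refl (Icc β α))),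
    inter_eq_right.2 (Icc_subset_Icc hβ hα), Real.volume_real_Icc]

lemma Phi_eq_max {a b ρ : ℝ} (ha : 0 < a) (hab : a < b) (hρ : 0 < ρ) :
    Phi a b ρ = max (arccos (a / b) - arccos (a / ρ)) 0 :=
  circTransform_eq_of_mem_iff (arccos_nonneg _) ((arccos_le_pi _).trans (by linarith [pi_pos]))
    fun _ hθ => pt2_polar_mem_Tri_iff ha hab hρ hθ

/-- For `0 < a < b`, the circular transform `Φ_{a,b}` of `T(a,b)` is given by:
`arccos(a/b)` for `0 < ρ ≤ a`, `arccos(a/b) − arccos(a/ρ)` for `a ≤ ρ < b`,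
and `0` for `ρ ≥ b`. -/
theorem stmt_15 (a b : ℝ) (ha : 0 < a) (hab : a < b) :
    (∀ ρ : ℝ, 0 < ρ → ρ ≤ a → Phi a b ρ = Real.arccos (a / b)) ∧
    (∀ ρ : ℝ, a ≤ ρ → ρ < b → Phi a b ρ = Real.arccos (a / b) - Real.arccos (a / ρ)) ∧
    (∀ ρ : ℝ, b ≤ ρ → Phi a b ρ = 0) := by
  have hb : 0 < b := ha.trans hab
  refine ⟨fun ρ hρ hρa => ?_, fun ρ haρ hρb => ?_, fun ρ hbρ => ?_⟩
  · rw [Phi_eq_max ha hab hρ, arccos_of_one_le ((one_le_div hρ).2 hρa), sub_zero,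
      max_eq_left (arccos_nonneg _)]
  · have hρ : 0 < ρ := ha.trans_le haρ
    rw [Phi_eq_max ha hab hρ, max_eq_left (sub_nonneg.2 (arccos_le_arccos _))]
    exact div_le_div_of_nonneg_left ha.le hρ hρb.le
  · rw [Phi_eq_max ha hab (hb.trans_le hbρ), max_eq_right (sub_nonpos.2 (arccos_le_arccos _))]
    exact div_le_div_of_nonneg_left ha.le hb hbρ
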